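/- In {0,1}^{S(r)} with S(r) = r(r+1)/2, there exists a sequence of 'stars' (each star being the intersection of a radius-1 Hamming ball with a cylinder set containing the ball's center) that partitions {0,1}^{S(r)}: the stars are pairwise disjoint, their union is all of {0,1}^{S(r)}, and the total number of stars equals F(r), where F(1) = 1 and F(i) = 2^{S(i−1)} + (2^i − (i+1))F(i−1). -/
import Mathlib


/-- The `r`-th triangular number `S(r) = r(r+1)/2`. -/
def Striangle (r : ℕ) : ℕ := r * (r + 1) / 2

/-- `F(1) = 1` and `F(i) = 2^{S(i-1)} + (2^i - (i+1)) F(i-1)` for `i ≥ 2`. -/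
def Fnum : ℕ → ℕ
  | 0 => 1
  | 1 => 1
  | (i + 2) => 2 ^ Striangle (i + 1) + (2 ^ (i + 2) - (i + 3)) * Fnum (i + 1)

/-- A star in `{0,1}^k`: the intersection of a radius-1 Hamming ball with a cylinder set
containing the ball's center. -/
def IsStar {k : ℕ} (A : Set (Fin k → Bool)) : Prop :=
  ∃ (z : Fin k → Bool) (Λ : Finset (Fin k)),
    A = {x | hammingDist x z ≤ 1 ∧ ∀ i ∈ Λ, x i = z i}

section StarPackingAux

open Finset

set_option linter.unusedSectionVars false
set_option maxHeartbeats 1000000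

variable {ι κ : Type*} [Fintype ι] [DecidableEq ι] [Fintype κ] [DecidableEq κ]

lemma hammingDist_comp_equiv (e : ι ≃ κ) (x y : κ → Bool) :
    hammingDist (x ∘ e) (y ∘ e) = hammingDist x y := by
  simp only [hammingDist]
  apply Finset.card_bij (fun i _ => e i)
  · intro a ha; simpa using by simpa using ha
  · intro a _ b _ h; exact e.injective h
  · intro b hb; exact ⟨e.symm b, by simpa using by simpa using hb, by simp⟩

lemma hammingDist_sumElim (a c : ι → Bool) (b d : κ → Bool) :
    hammingDist (Sum.elim a b) (Sum.elim c d) = hammingDist a c + hammingDist b d := by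
  classical
  simp only [hammingDist]
  have h : ({s | Sum.elim a b s ≠ Sum.elim c d s} : Finset (ι ⊕ κ)) =
      (({i | a i ≠ c i} : Finset ι).map ⟨Sum.inl, Sum.inl_injective⟩) ∪
      (({j | b j ≠ d j} : Finset κ).map ⟨Sum.inr, Sum.inr_injective⟩) := by
    ext s; cases s <;> simp
  rw [h, Finset.card_union_of_disjoint (by simp [Finset.disjoint_left]),
    Finset.card_map, Finset.card_map]

lemma hammingDist_split (x : ι ⊕ κ → Bool) (z : ι → Bool) (w : κ → Bool) :
    hammingDist x (Sum.elim z w) =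
      hammingDist (x ∘ Sum.inl) z + hammingDist (x ∘ Sum.inr) w := by
  conv_lhs => rw [← Sum.elim_comp_inl_inr x]
  exact hammingDist_sumElim _ _ _ _

lemma ballOne_mem_iff (w : κ → Bool) :
    hammingDist w (fun _ => false) ≤ 1 ↔
      w = (fun _ => false) ∨ ∃ i, w = Function.update (fun _ => false) i true := by
  constructor
  · intro h
    rcases Nat.le_one_iff_eq_zero_or_eq_one.1 h with h0 | h1
    · exact Or.inl (hammingDist_eq_zero.1 h0)
    · right
      obtain ⟨i, hi⟩ := Finset.card_eq_one.1 h1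
      refine ⟨i, funext fun j => ?_⟩
      have hmem : ∀ j : κ, w j ≠ false ↔ j = i := by
        intro j
        constructor
        · intro hj
          have : j ∈ ({s | w s ≠ (fun _ => false) s} : Finset κ) := by simpa using hj
          rw [hi] at this; simpa using this
        · intro hji
          have hii : i ∈ ({s | w s ≠ (fun _ => false) s} : Finset κ) := by rw [hi]; simp
          rw [hji]
          simpa using hii
      by_cases hj : j = i
      · subst hj
        have := (hmem j).2 rfl
        simp [Function.update_self, eq_true_of_ne_false this]
      · have : w j = false := by
          by_contra hc; exact hj ((hmem j).1 hc)
        simp [Function.update_of_ne hj, this]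
  · rintro (rfl | ⟨i, rfl⟩)
    · simp [hammingDist_self]
    · have : hammingDist (Function.update (fun _ => false) i true) (fun _ => false) = 1 := by
        rw [hammingDist]
        rw [show ({s | Function.update (fun _ => false) i true s ≠ (fun _ => false) s} :
            Finset κ) = {i} by
          ext j
          by_cases hj : j = i <;> simp [hj, Function.update_of_ne, Function.update_self]]
        simp
      omega

lemma card_ball_one :
    Fintype.card {w : κ → Bool // hammingDist w (fun _ => false) ≤ 1} =
      Fintype.card κ + 1 := by
  classical
  rw [Fintype.card_subtype]
  have h : ({w | hammingDist w (fun _ => false) ≤ 1} : Finset (κ → Bool)) =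
      insert (fun _ => false) (univ.image fun i => Function.update (fun _ => false) i true) := by
    ext w
    simp [ballOne_mem_iff, eq_comm]
  rw [h, Finset.card_insert_of_notMem, Finset.card_image_of_injective _ ?inj]
  · simp [add_comm]
  case inj =>
    intro i j hij
    by_contra hne
    have := congrFun hij i
    simp [Function.update_self, Function.update_of_ne hne] at this
  · intro hmem
    obtain ⟨i, -, hc⟩ := Finset.mem_image.1 hmem
    have := congrFun hc i
    simp [Function.update_self] at this

lemma card_residual :
    Fintype.card {w : κ → Bool // 1 < hammingDist w (fun _ => false)} =
      2 ^ Fintype.card κ - (Fintype.card κ + 1) := by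
  classical
  have h1 : ∀ w : κ → Bool, (1 < hammingDist w (fun _ => false)) =
      ¬ (hammingDist w (fun _ => false) ≤ 1) := by
    intro w; simp [not_le]
  have := Fintype.card_subtype_compl (fun w : κ → Bool => hammingDist w (fun _ => false) ≤ 1)
  calc Fintype.card {w : κ → Bool // 1 < hammingDist w (fun _ => false)}
      = Fintype.card {w : κ → Bool // ¬ hammingDist w (fun _ => false) ≤ 1} := by
        apply Fintype.card_congr; apply Equiv.subtypeEquivRight; intro w; simp [not_le]
    _ = Fintype.card (κ → Bool) - Fintype.card {w : κ → Bool // hammingDist w (fun _ => false) ≤ 1} := this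
    _ = 2 ^ Fintype.card κ - (Fintype.card κ + 1) := by
        rw [card_ball_one]; simp [Fintype.card_fun]

def IsStarG {ι : Type*} [Fintype ι] [DecidableEq ι] (A : Set (ι → Bool)) : Prop :=
  ∃ (z : ι → Bool) (Λ : Finset ι),
    A = {x | hammingDist x z ≤ 1 ∧ ∀ i ∈ Λ, x i = z i}

lemma pack_step {I : Type*}
    (stars : I → Set (ι → Bool))
    (h1 : ∀ i, IsStarG (stars i))
    (h2 : ∀ i j, i ≠ j → Disjoint (stars i) (stars j))
    (h3 : (⋃ i, stars i) = Set.univ) :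
    ∃ stars' : ((ι → Bool) ⊕ ({w : κ → Bool // 1 < hammingDist w (fun _ => false)} × I)) →
        Set ((ι ⊕ κ) → Bool),
      (∀ i, IsStarG (stars' i)) ∧
      (∀ i j, i ≠ j → Disjoint (stars' i) (stars' j)) ∧
      (⋃ i, stars' i) = Set.univ := by
  classical
  set z0 : κ → Bool := fun _ => false with hz0
  refine ⟨Sum.elim
      (fun p => {x | (x ∘ Sum.inl) = p ∧ hammingDist (x ∘ Sum.inr) z0 ≤ 1})
      (fun q => {x | (x ∘ Sum.inr) = q.1.1 ∧ (x ∘ Sum.inl) ∈ stars q.2}),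
    ?_, ?_, ?_⟩
  · rintro (p | ⟨⟨w, hw⟩, i⟩)
    · refine ⟨Sum.elim p z0, Finset.univ.image Sum.inl, ?_⟩
      ext x
      simp only [Set.mem_setOf_eq, Sum.elim_inl]
      constructor
      · rintro ⟨hp, hd⟩
        constructor
        · rw [hammingDist_split, show x ∘ Sum.inl = p from hp, hammingDist_self]
          simpa using hd
        · rintro s hs
          simp only [Finset.mem_image, Finset.mem_univ, true_and] at hs
          obtain ⟨i, rfl⟩ := hs
          simpa using congrFun hp i
      · rintro ⟨hd, hΛ⟩
        have hp : x ∘ Sum.inl = p := by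
          funext i
          simpa using hΛ (Sum.inl i) (by simp)
        refine ⟨hp, ?_⟩
        rw [hammingDist_split, hp, hammingDist_self] at hd
        simpa using hd
    · obtain ⟨z, Λ, hA⟩ := h1 i
      refine ⟨Sum.elim z w, Λ.image Sum.inl ∪ Finset.univ.image Sum.inr, ?_⟩
      ext x
      simp only [Sum.elim_inr, Set.mem_setOf_eq, hA, Sum.elim_inl]
      constructor
      · rintro ⟨hq, hd, hΛ⟩
        constructor
        · rw [hammingDist_split, show x ∘ Sum.inr = w from hq, hammingDist_self]
          simpa using hd
        · rintro s hs
          rcases Finset.mem_union.1 hs with h | h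
          · obtain ⟨j, hj, rfl⟩ := Finset.mem_image.1 h
            simpa using hΛ j hj
          · obtain ⟨j, -, rfl⟩ := Finset.mem_image.1 h
            simpa using congrFun hq j
      · rintro ⟨hd, hΛ⟩
        have hq : x ∘ Sum.inr = w := by
          funext j
          simpa using hΛ (Sum.inr j) (by simp)
        rw [hammingDist_split, hq, hammingDist_self] at hd
        refine ⟨hq, by simpa using hd, fun j hj => ?_⟩
        simpa using hΛ (Sum.inl j) (Finset.mem_union_left _ (Finset.mem_image_of_mem _ hj))
  · rintro (p | ⟨⟨w, hw⟩, i⟩) (q | ⟨⟨v, hv⟩, j⟩) hne <;>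
      rw [Set.disjoint_left] <;> rintro x hx hy
    · exact hne (by rw [Sum.inl.injEq, ← hx.1, ← hy.1]) 
    · exact absurd hx.2 (by rw [hy.1]; exact not_le.2 hv)
    · exact absurd hy.2 (by rw [hx.1]; exact not_le.2 hw)
    · by_cases hwv : w = v
      · subst hwv
        have hij : i ≠ j := by
          intro h; subst h; exact hne rfl
        exact Set.disjoint_left.1 (h2 i j hij) hx.2 hy.2
      · exact hwv (hx.1.symm.trans hy.1)
  · ext x
    simp only [Set.mem_iUnion, Set.mem_univ, iff_true]
    by_cases hd : hammingDist (x ∘ Sum.inr) z0 ≤ 1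
    · exact ⟨Sum.inl (x ∘ Sum.inl), show _ ∧ _ from ⟨rfl, hd⟩⟩
    · have hx : (x ∘ Sum.inl) ∈ ⋃ i, stars i := h3 ▸ Set.mem_univ _
      obtain ⟨i, hi⟩ := Set.mem_iUnion.1 hx
      exact ⟨Sum.inr ⟨⟨x ∘ Sum.inr, not_le.1 hd⟩, i⟩, show _ ∧ _ from ⟨rfl, hi⟩⟩

lemma pack_transport {ι ι' I I' : Type*} [Fintype ι] [DecidableEq ι]
    [Fintype ι'] [DecidableEq ι'] (e : ι ≃ ι') (eI : I' ≃ I)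
    (stars : I → Set (ι → Bool))
    (h1 : ∀ i, IsStarG (stars i))
    (h2 : ∀ i j, i ≠ j → Disjoint (stars i) (stars j))
    (h3 : (⋃ i, stars i) = Set.univ) :
    ∃ stars' : I' → Set (ι' → Bool),
      (∀ i, IsStarG (stars' i)) ∧
      (∀ i j, i ≠ j → Disjoint (stars' i) (stars' j)) ∧
      (⋃ i, stars' i) = Set.univ := by
  refine ⟨fun i' => (fun x => x ∘ e) ⁻¹' stars (eI i'), ?_, ?_, ?_⟩
  · intro i'
    obtain ⟨z, Λ, hA⟩ := h1 (eI i')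
    refine ⟨z ∘ e.symm, Λ.image e, ?_⟩
    ext x
    simp only [Set.mem_preimage, hA, Set.mem_setOf_eq]
    have hz : z = (z ∘ e.symm) ∘ e := by funext j; simp
    constructor
    · rintro ⟨hd, hΛ⟩
      constructor
      · rw [← hammingDist_comp_equiv e x (z ∘ e.symm), ← hz]; exact hd
      · intro s hs
        obtain ⟨j, hj, rfl⟩ := Finset.mem_image.1 hs
        simpa using hΛ j hj
    · rintro ⟨hd, hΛ⟩
      constructor
      · rw [hz, hammingDist_comp_equiv e x (z ∘ e.symm)]; exact hd
      · intro j hj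
        have := hΛ (e j) (Finset.mem_image_of_mem _ hj)
        simpa using this
  · intro i j hij
    exact Disjoint.preimage _ (h2 _ _ (fun h => hij (eI.injective h)))
  · rw [← Set.preimage_iUnion]
    have : (⋃ i', stars (eI i')) = ⋃ i, stars i := eI.surjective.iUnion_comp _
    rw [this, h3, Set.preimage_univ]

lemma Striangle_succ (r : ℕ) : Striangle (r + 1) = Striangle r + (r + 1) := by
  have h : (r + 1) * (r + 1 + 1) = r * (r + 1) + 2 * (r + 1) := by ring
  obtain ⟨k, hk⟩ := Nat.even_mul_succ_self r
  simp only [Striangle]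
  omega

theorem star_packing_of_cube' (r : ℕ) (hr : 1 ≤ r) :
    ∃ stars : Fin (Fnum r) → Set (Fin (Striangle r) → Bool),
      (∀ i, IsStarG (stars i)) ∧
      (∀ i j, i ≠ j → Disjoint (stars i) (stars j)) ∧
      (⋃ i, stars i) = Set.univ := by
  induction r, hr using Nat.le_induction with
  | base =>
    refine ⟨fun _ => Set.univ, fun i => ⟨fun _ => false, ∅, ?_⟩, ?_, ?_⟩
    · ext x
      simp only [Set.mem_univ, Set.mem_setOf_eq, Finset.notMem_empty, true_iff]
      refine ⟨le_trans hammingDist_le_card_fintype ?_, by tauto⟩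
      simp [Striangle]
    · intro i j hij
      exfalso
      apply hij
      apply Fin.ext
      have hi := i.2
      have hj := j.2
      have h1 : Fnum 1 = 1 := rfl
      omega
    · have : Nonempty (Fin (Fnum 1)) := ⟨⟨0, by rw [show Fnum 1 = 1 from rfl]; omega⟩⟩
      simp [Set.iUnion_const]
  | succ r hr ih =>
    obtain ⟨stars, h1, h2, h3⟩ := ih
    obtain ⟨stars', h1', h2', h3'⟩ :=
      pack_step (ι := Fin (Striangle r)) (κ := Fin (r + 1)) stars h1 h2 h3
    have hcard : Fnum (r + 1) =
        Fintype.card ((Fin (Striangle r) → Bool) ⊕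
          ({w : Fin (r + 1) → Bool // 1 < hammingDist w (fun _ => false)} × Fin (Fnum r))) := by
      rw [Fintype.card_sum, Fintype.card_prod, Fintype.card_fun, card_residual]
      simp only [Fintype.card_fin, Fintype.card_bool]
      obtain ⟨i, rfl⟩ : ∃ i, r = i + 1 := ⟨r - 1, by omega⟩
      show Fnum (i + 2) = _
      rw [Fnum]
    have e : Fin (Striangle r) ⊕ Fin (r + 1) ≃ Fin (Striangle (r + 1)) :=
      finSumFinEquiv.trans (finCongr (Striangle_succ r).symm)
    exact pack_transport e (Fintype.equivFinOfCardEq hcard.symm).symm stars' h1' h2' h3'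


end StarPackingAux

/-- `{0,1}^{S(r)}` can be packed exactly by `F(r)` pairwise disjoint stars whose union is the
whole cube. -/
theorem star_packing_of_cube (r : ℕ) (hr : 1 ≤ r) :
    ∃ stars : Fin (Fnum r) → Set (Fin (Striangle r) → Bool),
      (∀ i, IsStar (stars i)) ∧
      (∀ i j, i ≠ j → Disjoint (stars i) (stars j)) ∧
      (⋃ i, stars i) = Set.univ := by
  obtain ⟨stars, h1, h2, h3⟩ := star_packing_of_cube' r hr
  exact ⟨stars, fun i => h1 i, h2, h3⟩
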